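/- Let m ≥ 1, let G be a finite subgroup of GL(m, ℂ), and let V = ℂ^m be the natural representation of G with character χ_V(g) = tr(g). Let L be a normal subgroup of G such that G/L is cyclic and every irreducible complex character of L is extendible to G. Then for every irreducible character η of G and every irreducible character χ of L, the sum over all irreducible characters θ of G whose restriction θ|_L equals χ of the multiplicities ⟨χ_V·θ, η⟩_G equals ⟨(χ_V|_L)·χ, η|_L⟩_L. (In terms of McKay quivers: the arrows of Q_G ending at η and starting in the fiber over χ biject with the arrows of Q_L from χ to η|_L.) -/

import Mathlib

open scoped BigOperators

/-- The inner product `⟨φ, ψ⟩_G = (1/|G|) Σ_{g ∈ G} φ(g)·conj(ψ(g))` of two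
class functions on a finite group `G`. -/
noncomputable def charInner (G : Type) [Group G] (φ ψ : G → ℂ) : ℂ :=
  (Nat.card G : ℂ)⁻¹ * ∑ᶠ g : G, φ g * (starRingEnd ℂ) (ψ g)

/-- `χ` is an irreducible complex character of the finite group `G`:
it is the character of some simple finite-dimensional complex representation of `G`. -/
def IsIrrChar (G : Type) [Group G] (χ : G → ℂ) : Prop :=
  ∃ V : FDRep ℂ G, CategoryTheory.Simple V ∧ ∀ g : G, V.character g = χ g

/-! Gallagher's argument for an abelian quotient `G/L`. Let `θ'` be an irreducible extension of
`χ` and let `λ` run over the linear characters of `G/L`, inflated to `G`. Since `Σ_λ λ` is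
`|G : L|` times the indicator function of `L`, averaging over `λ` turns inner products on `G`
into inner products on `L`. In particular, if `θ` is an irreducible character over `χ`, then
`Σ_λ ⟨θ, λθ'⟩_G = ⟨χ, χ⟩_L = 1`. By orthonormality this means that `θ = λθ'` for exactly one `λ`.
So `λ ↦ λθ'` is a bijection onto the fiber over `χ`, and the same averaging turns
`Σ_λ ⟨χ_V λθ', η⟩_G` into `⟨χ_V χ, η⟩_L`. -/

open CategoryTheory

namespace Representation

variable {k G V : Type*} [CommSemiring k] [Monoid G] [AddCommMonoid V] [Module k V]

def twist (ρ : Representation k G V) (χ : G →* k) : Representation k G V where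
  toFun g := χ g • ρ g
  map_one' := by simp
  map_mul' g h := by rw [map_mul, map_mul, smul_mul_smul_comm]

end Representation

namespace FDRep

variable {k G : Type} [Field k]

noncomputable def twist [Monoid G] (X : FDRep k G) (χ : G →* k) : FDRep k G :=
  FDRep.of (Representation.twist X.ρ χ)

lemma char_twist [Monoid G] (X : FDRep k G) (χ : G →* k) (g : G) :
    (X.twist χ).character g = χ g * X.character g := by
  change LinearMap.trace k X (χ g • X.ρ g) = _
  rw [map_smul, smul_eq_mul]
  rfl

lemma simple_twist [Group G] [Fintype G] [IsAlgClosed k] [CharZero k] (X : FDRep k G) [Simple X]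
    (χ : G →* k) :
    Simple (X.twist χ) := by
  rw [simple_iff_char_is_norm_one, ← (simple_iff_char_is_norm_one X).mp ‹_›]
  refine Finset.sum_congr rfl fun g _ => ?_
  rw [char_twist, char_twist, mul_mul_mul_comm, ← map_mul, mul_inv_cancel, map_one, one_mul]

end FDRep

variable {G : Type} [Group G]

lemma IsIrrChar.twist {θ : G → ℂ} [Fintype G] (hθ : IsIrrChar G θ) (χ : G →* ℂ) :
    IsIrrChar G (fun g => χ g * θ g) := by
  obtain ⟨X, hX, hXθ⟩ := hθ
  exact ⟨X.twist χ, X.simple_twist χ, fun g => by rw [FDRep.char_twist, hXθ]⟩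

lemma IsIrrChar.orthonormal [Fintype G] {θ θ₂ : G → ℂ} (hθ : IsIrrChar G θ)
    (hθ₂ : IsIrrChar G θ₂) :
    (Nat.card G : ℂ)⁻¹ * ∑ g, θ g * θ₂ g⁻¹ = if θ = θ₂ then 1 else 0 := by
  obtain ⟨X, hX, hXθ⟩ := hθ
  obtain ⟨Y, hY, hYθ⟩ := hθ₂
  have : Invertible (Nat.card G : ℂ) := invertibleOfNonzero (by simp)
  have hθX : θ = X.character := funext fun g => (hXθ g).symm
  have hθY : θ₂ = Y.character := funext fun g => (hYθ g).symm
  subst hθX hθY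
  rw [FDRep.char_orthonormal]
  congr 1
  refine propext ⟨fun ⟨e⟩ => FDRep.char_iso e, fun h => ?_⟩
  -- equal characters give `⟨χ_X, χ_Y⟩ = ⟨χ_X, χ_X⟩ = 1`, which excludes `X ≇ Y`
  by_contra hXY
  have := FDRep.char_orthonormal X Y
  rw [← h, FDRep.char_orthonormal X X, if_pos ⟨Iso.refl X⟩, if_neg hXY] at this
  exact one_ne_zero this

open scoped IsMulCommutative

namespace AddChar

variable (L : Subgroup G) [L.Normal]

/-- Characters of the abelian group `G ⧸ L` are taken as additive characters of
`Additive (G ⧸ L)` so that Mathlib's Pontryagin duality for finite abelian groups applies. -/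
def inflate (ψ : AddChar (Additive (G ⧸ L)) ℂ) : G →* ℂ where
  toFun g := ψ (Additive.ofMul (g : G ⧸ L))
  map_one' := ψ.map_zero_eq_one
  map_mul' g h := ψ.map_add_eq_mul (Additive.ofMul (g : G ⧸ L)) (Additive.ofMul (h : G ⧸ L))

@[simp] lemma inflate_apply (ψ : AddChar (Additive (G ⧸ L)) ℂ) (g : G) :
    inflate L ψ g = ψ (Additive.ofMul (g : G ⧸ L)) := rfl

lemma inflate_apply_of_mem (ψ : AddChar (Additive (G ⧸ L)) ℂ) {g : G} (hg : g ∈ L) :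
    inflate L ψ g = 1 := by
  simp [(QuotientGroup.eq_one_iff g).mpr hg]

open scoped Classical in
lemma sum_inflate_apply [IsMulCommutative (G ⧸ L)] [Finite (G ⧸ L)] (g : G) :
    ∑ ψ, inflate L ψ g = if g ∈ L then (L.index : ℂ) else 0 := by
  have := Fintype.ofFinite (G ⧸ L)
  calc ∑ ψ, inflate L ψ g = ∑ ψ : AddChar (Additive (G ⧸ L)) ℂ, ψ (Additive.ofMul (g : G ⧸ L)) :=
        rfl
    _ = _ := AddChar.sum_apply_eq_ite _
    _ = _ := by simp [QuotientGroup.eq_one_iff, Subgroup.index, Nat.card_eq_fintype_card]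

end AddChar

lemma finsum_mem_eq_sum_of_existsUnique {ι α M : Type*} [Fintype ι] [AddCommMonoid M]
    {s : Set α} (e : ι → α) (he : ∀ i, e i ∈ s) (he' : ∀ a ∈ s, ∃! i, e i = a) (f : α → M) :
    ∑ᶠ a ∈ s, f a = ∑ i, f (e i) := by
  have hs : s = Set.range e :=
    Set.ext fun a => ⟨fun ha => (he' a ha).exists, by rintro ⟨i, rfl⟩; exact he i⟩
  have hinj : Function.Injective e := fun i j hij => (he' (e i) (he i)).unique rfl hij.symm
  rw [hs, finsum_mem_range hinj, finsum_eq_sum_of_fintype]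

open scoped Classical in
lemma Subgroup.sum_inv_card_mul_sum_eq [Fintype G] (L : Subgroup G) [Fintype L] {ι : Type*}
    [Fintype ι] (c : ι → G → ℂ) (hc : ∀ g, ∑ i, c i g = if g ∈ L then (L.index : ℂ) else 0)
    (F : G → ℂ) :
    ∑ i, (Nat.card G : ℂ)⁻¹ * ∑ g, c i g * F g = (Nat.card L : ℂ)⁻¹ * ∑ x : L, F x := by
  have hL : (L.index : ℂ) ≠ 0 := by simp [Subgroup.index_ne_zero_of_finite]
  rw [← Finset.mul_sum, Finset.sum_comm]
  simp_rw [← Finset.sum_mul, hc, ite_mul, zero_mul]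
  rw [← Finset.sum_filter, Finset.sum_subtype (p := (· ∈ L)) _ (fun x => by simp),
    ← Finset.mul_sum, ← mul_assoc, ← L.card_mul_index]
  push_cast
  field_simp

section Gallagher

variable [Fintype G] {L : Subgroup G} [Fintype L] [L.Normal] [IsMulCommutative (G ⧸ L)]
  {θ' : G → ℂ} {χ : L → ℂ}

lemma sum_inner_inflate_mul_eq_one (hχ : IsIrrChar L χ) (hθ' : ∀ x : L, θ' x = χ x)
    {θ : G → ℂ} (hθ : ∀ x : L, θ x = χ x) :
    ∑ ψ, (Nat.card G : ℂ)⁻¹ * ∑ g, θ g * (AddChar.inflate L ψ g⁻¹ * θ' g⁻¹) = 1 := by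
  simp_rw [mul_left_comm (θ _)]
  rw [L.sum_inv_card_mul_sum_eq (fun ψ g => AddChar.inflate L ψ g⁻¹)
    (fun g => by rw [AddChar.sum_inflate_apply, inv_mem_iff])]
  have := hχ.orthonormal hχ
  rw [if_pos rfl] at this
  simpa [hθ, ← hθ'] using this

lemma existsUnique_inflate_mul_eq (hθ' : IsIrrChar G θ') (hθ'χ : ∀ x : L, θ' x = χ x)
    (hχ : IsIrrChar L χ) {θ : G → ℂ} (hθ : IsIrrChar G θ) (hθχ : ∀ x : L, θ x = χ x) :
    ∃! ψ, (fun g => AddChar.inflate L ψ g * θ' g) = θ := by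
  have hsum := sum_inner_inflate_mul_eq_one hχ hθ'χ hθχ
  simp_rw [hθ.orthonormal (hθ'.twist _), Finset.sum_boole, eq_comm (a := θ)] at hsum
  exact (Fintype.existsUnique_iff_card_one _).mpr (by exact_mod_cast hsum)

end Gallagher

lemma sum_charInner_inflate_mul [Fintype G] (L : Subgroup G) [Fintype L] [L.Normal]
    [IsMulCommutative (G ⧸ L)] (φ η : G → ℂ) :
    ∑ ψ, charInner G (fun g => AddChar.inflate L ψ g * φ g) η
      = charInner L (fun x => φ x) (fun x => η x) := by
  simp only [charInner, finsum_eq_sum_of_fintype, mul_assoc]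
  exact L.sum_inv_card_mul_sum_eq _ (AddChar.sum_inflate_apply L) _

theorem mckay_stmt5_general (m : ℕ)
    (G : Subgroup (Matrix.GeneralLinearGroup (Fin m) ℂ)) [Finite G]
    (χV : G → ℂ)
    (L : Subgroup G) [L.Normal]
    (hcyc : IsCyclic (G ⧸ L))
    (hext : ∀ χ : L → ℂ, IsIrrChar L χ →
      ∃ χ' : G → ℂ, IsIrrChar G χ' ∧ ∀ x : L, χ' (x : G) = χ x)
    (η : G → ℂ)
    (χ : L → ℂ) (hχ : IsIrrChar L χ) :
    (∑ᶠ θ ∈ {θ : G → ℂ | IsIrrChar G θ ∧ ∀ x : L, θ (x : G) = χ x},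
        charInner G (fun g => χV g * θ g) η)
      = charInner L (fun x : L => χV (x : G) * χ x) (fun x : L => η (x : G)) := by
  have := Fintype.ofFinite G
  have := Fintype.ofFinite L
  obtain ⟨θ', hθ', hθ'χ⟩ := hext χ hχ
  rw [finsum_mem_eq_sum_of_existsUnique (fun ψ g => AddChar.inflate L ψ g * θ' g)]
  · simp_rw [mul_left_comm (χV _), sum_charInner_inflate_mul, hθ'χ]
  · refine fun ψ => ⟨hθ'.twist _, fun x => ?_⟩
    beta_reduce
    rw [AddChar.inflate_apply_of_mem L ψ x.2, one_mul, hθ'χ]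
  · exact fun θ hθ => existsUnique_inflate_mul_eq hθ' hθ'χ hχ hθ.1 hθ.2

/-- Let `m ≥ 1`, let `G` be a finite subgroup of `GL(m, ℂ)`, and let `χ_V(g) = tr(g)` be
the character of the natural representation `V = ℂ^m`.  Let `L` be a normal subgroup of
`G` such that `G/L` is cyclic and every irreducible complex character of `L` is extendible
to `G`.  Then for every irreducible character `η` of `G` and every irreducible character
`χ` of `L`, the sum over all irreducible characters `θ` of `G` with `θ|_L = χ` of the
multiplicities `⟨χ_V·θ, η⟩_G` equals `⟨(χ_V|_L)·χ, η|_L⟩_L`. -/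
theorem mckay_stmt5 (m : ℕ) (hm : 1 ≤ m)
    (G : Subgroup (Matrix.GeneralLinearGroup (Fin m) ℂ)) [Finite G]
    (χV : G → ℂ)
    (hχV : ∀ g : G,
      χV g = ((g : Matrix.GeneralLinearGroup (Fin m) ℂ) : Matrix (Fin m) (Fin m) ℂ).trace)
    (L : Subgroup G) [L.Normal]
    (hcyc : IsCyclic (G ⧸ L))
    (hext : ∀ χ : L → ℂ, IsIrrChar L χ →
      ∃ χ' : G → ℂ, IsIrrChar G χ' ∧ ∀ x : L, χ' (x : G) = χ x)
    (η : G → ℂ) (hη : IsIrrChar G η)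
    (χ : L → ℂ) (hχ : IsIrrChar L χ) :
    (∑ᶠ θ ∈ {θ : G → ℂ | IsIrrChar G θ ∧ ∀ x : L, θ (x : G) = χ x},
        charInner G (fun g => χV g * θ g) η)
      = charInner L (fun x : L => χV (x : G) * χ x) (fun x : L => η (x : G)) :=
  mckay_stmt5_general m G χV L hcyc hext η χ hχ
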